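/- arXiv:1910.08782 — 3 statements merged into one kernel-verified Lean document; each statement's English description precedes it below -/
import Mathlib

section
/- (Classification of vectors of type (a) in L₄) Let c ∈ ℤ⁴ be nonzero. Then cᵀG₄⁻¹c = 1 and the least positive integer k with k·G₄⁻¹c ∈ ℤ⁴ equals 2 if and only if c = (2,1,1,1) or c = (−2,−1,−1,−1). -/
/-!
Writing `G₄⁻¹ = A / 10` with `A` integral, `20 · cᵀG₄⁻¹c = 5 c₀² + ∑ᵢ₌₁³ (2cᵢ - c₀)²`, so a
vector of norm `1` has every `(2cᵢ - c₀)²` at most `20`. If `c` has order `2` then `5` divides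
each `2cᵢ - c₀`, which forces `2cᵢ = c₀` and then `5 c₀² = 20`. Conversely
`G₄⁻¹ (±(2,1,1,1)) = ±(1/2,0,0,0)`.
-/

open Matrix

/-- The Gram matrix of the even positive definite lattice `L₄` (determinant 500). -/
def G4 : Matrix (Fin 4) (Fin 4) ℚ :=
  !![4, 2, 2, 2; 2, 6, 1, 1; 2, 1, 6, 1; 2, 1, 1, 6]

lemma Int.eq_zero_of_dvd_of_sq_lt {n x : ℤ} (h : n ∣ x) (hx : x ^ 2 < n ^ 2) : x = 0 :=
  Int.eq_zero_of_dvd_of_natAbs_lt_natAbs h (Int.natAbs_lt_iff_sq_lt.2 hx)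

lemma Int.exists_intCast_eq_div_iff {K : Type*} [Field K] [CharZero K] {x n : ℤ} (hn : n ≠ 0) :
    (∃ m : ℤ, (x : K) / n = m) ↔ n ∣ x := by
  constructor
  · rintro ⟨m, hm⟩
    refine ⟨m, ?_⟩
    rw [div_eq_iff (by exact_mod_cast hn)] at hm
    exact_mod_cast hm.trans (mul_comm _ _)
  · rintro ⟨m, rfl⟩
    exact ⟨m, by push_cast; field_simp⟩

/-- `10 • G4⁻¹`, an integral matrix. -/
def tenG4inv : Matrix (Fin 4) (Fin 4) ℤ :=
  !![4, -1, -1, -1; -1, 2, 0, 0; -1, 0, 2, 0; -1, 0, 0, 2]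

lemma G4_inv_eq : G4⁻¹ = (10 : ℚ)⁻¹ • tenG4inv.map (Int.cast : ℤ → ℚ) := by
  refine inv_eq_right_inv ?_
  ext i j
  fin_cases i <;> fin_cases j <;>
    norm_num [G4, tenG4inv, mul_apply, Fin.sum_univ_four, one_apply, cons_val_two,
      cons_val_three]

lemma tenG4inv_mulVec (c : Fin 4 → ℤ) :
    tenG4inv *ᵥ c =
      ![4 * c 0 - c 1 - c 2 - c 3, 2 * c 1 - c 0, 2 * c 2 - c 0, 2 * c 3 - c 0] := by
  ext i
  fin_cases i <;> simp [tenG4inv, mulVec, dotProduct, Fin.sum_univ_four] <;> ring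

lemma two_mul_dotProduct_tenG4inv_mulVec (c : Fin 4 → ℤ) :
    2 * (c ⬝ᵥ tenG4inv *ᵥ c) =
      5 * c 0 ^ 2 + (2 * c 1 - c 0) ^ 2 + (2 * c 2 - c 0) ^ 2 + (2 * c 3 - c 0) ^ 2 := by
  simp [tenG4inv_mulVec, dotProduct, Fin.sum_univ_four]
  ring

lemma G4_inv_mulVec_intCast (c : Fin 4 → ℤ) (i : Fin 4) :
    (G4⁻¹ *ᵥ fun j => (c j : ℚ)) i = ((tenG4inv *ᵥ c) i : ℚ) / 10 := by
  rw [G4_inv_eq, smul_mulVec, Pi.smul_apply, smul_eq_mul, inv_mul_eq_div]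
  exact congrArg (· / 10) ((Int.castRingHom ℚ).map_mulVec tenG4inv c i).symm

lemma intCast_dotProduct_G4_inv_mulVec_eq_one_iff (c : Fin 4 → ℤ) :
    (fun i => (c i : ℚ)) ⬝ᵥ G4⁻¹ *ᵥ (fun i => (c i : ℚ)) = 1 ↔
      5 * c 0 ^ 2 + (2 * c 1 - c 0) ^ 2 + (2 * c 2 - c 0) ^ 2 + (2 * c 3 - c 0) ^ 2 = 20 := by
  have hcast : (fun i => (c i : ℚ)) ⬝ᵥ G4⁻¹ *ᵥ (fun i => (c i : ℚ)) =
      ((c ⬝ᵥ tenG4inv *ᵥ c : ℤ) : ℚ) / 10 := by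
    simp only [dotProduct, G4_inv_mulVec_intCast, ← mul_div_assoc, ← Finset.sum_div]
    push_cast
    rfl
  rw [hcast, div_eq_one_iff_eq (by norm_num), ← two_mul_dotProduct_tenG4inv_mulVec]
  norm_cast
  omega

lemma natCast_mul_G4_inv_mulVec_integral_iff (k : ℕ) (c : Fin 4 → ℤ) :
    (∀ i, ∃ m : ℤ, (k : ℚ) * (G4⁻¹ *ᵥ fun j => (c j : ℚ)) i = m) ↔
      ∀ i, 10 ∣ (k : ℤ) * (tenG4inv *ᵥ c) i := by
  refine forall_congr' fun i => ?_
  rw [G4_inv_mulVec_intCast, ← mul_div_assoc, ← Int.exists_intCast_eq_div_iff (K := ℚ) (by norm_num)]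
  push_cast
  rfl

lemma eq_or_eq_neg_of_five_dvd_tenG4inv_mulVec (c : Fin 4 → ℤ)
    (hq : 5 * c 0 ^ 2 + (2 * c 1 - c 0) ^ 2 + (2 * c 2 - c 0) ^ 2 + (2 * c 3 - c 0) ^ 2 = 20)
    (h5 : ∀ i, 5 ∣ (tenG4inv *ᵥ c) i) :
    c = ![2, 1, 1, 1] ∨ c = ![-2, -1, -1, -1] := by
  simp only [tenG4inv_mulVec, Fin.forall_fin_succ] at h5
  obtain ⟨-, h1, h2, h3, -⟩ := h5
  have eq_zero {x : ℤ} (hx : 5 ∣ x) (hsq : x ^ 2 ≤ 20) : x = 0 :=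
    Int.eq_zero_of_dvd_of_sq_lt hx (by linarith)
  have e1 := eq_zero (by simpa using h1)
    (by nlinarith [sq_nonneg (2 * c 2 - c 0), sq_nonneg (2 * c 3 - c 0)])
  have e2 := eq_zero (by simpa using h2)
    (by nlinarith [sq_nonneg (2 * c 1 - c 0), sq_nonneg (2 * c 3 - c 0)])
  have e3 := eq_zero (by simpa using h3)
    (by nlinarith [sq_nonneg (2 * c 1 - c 0), sq_nonneg (2 * c 2 - c 0)])
  have ha : c 0 ^ 2 = 2 ^ 2 := by simp only [e1, e2, e3] at hq; linarith
  rcases sq_eq_sq_iff_eq_or_eq_neg.1 ha with ha | ha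
  · left; ext i; fin_cases i <;> simp <;> omega
  · right; ext i; fin_cases i <;> simp <;> omega

theorem L4_type_a_classification_general (c : Fin 4 → ℤ) :
    ((fun i => (c i : ℚ)) ⬝ᵥ G4⁻¹.mulVec (fun i => (c i : ℚ)) = 1 ∧
      IsLeast {k : ℕ | 0 < k ∧
        ∀ i, ∃ m : ℤ, (k : ℚ) * G4⁻¹.mulVec (fun i => (c i : ℚ)) i = (m : ℚ)} 2) ↔
    (c = ![2, 1, 1, 1] ∨ c = ![-2, -1, -1, -1]) := by
  simp only [intCast_dotProduct_G4_inv_mulVec_eq_one_iff, natCast_mul_G4_inv_mulVec_integral_iff]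
  constructor
  · rintro ⟨hq, ⟨-, h2⟩, -⟩
    exact eq_or_eq_neg_of_five_dvd_tenG4inv_mulVec c hq fun i => by have := h2 i; omega
  · rintro (rfl | rfl) <;>
      refine ⟨by decide, ⟨two_pos, by simp [tenG4inv_mulVec, Fin.forall_fin_succ]⟩, ?_⟩ <;>
      rintro k ⟨hk, hdvd⟩ <;>
      have h0 := hdvd 0 <;> simp [tenG4inv_mulVec] at h0 <;> omega

/-- Classification of vectors of type (a) in `L₄`: a nonzero `c ∈ ℤ⁴` has norm
`cᵀG₄⁻¹c = 1` and order `2` in the discriminant group iff `c = ±(2,1,1,1)`. -/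
theorem L4_type_a_classification (c : Fin 4 → ℤ) (hc : c ≠ 0) :
    ((fun i => (c i : ℚ)) ⬝ᵥ G4⁻¹.mulVec (fun i => (c i : ℚ)) = 1 ∧
      IsLeast {k : ℕ | 0 < k ∧
        ∀ i, ∃ m : ℤ, (k : ℚ) * G4⁻¹.mulVec (fun i => (c i : ℚ)) i = (m : ℚ)} 2) ↔
    (c = ![2, 1, 1, 1] ∨ c = ![-2, -1, -1, -1]) :=
  L4_type_a_classification_general c
end

section
/- (Classification of vectors of type (ii) in L₆) Let c ∈ ℤ⁶ be nonzero. Then cᵀG₆⁻¹c = 2/3 and the least positive integer k with k·G₆⁻¹c ∈ ℤ⁶ equals 3 if and only if c or −c belongs to the set {(0,0,1,0,0,0), (0,0,0,1,0,0), (0,0,1,−1,0,0), (0,1,0,0,0,−1), (0,1,0,0,0,1)}. -/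
/-! `G₆⁻¹ = S / 6` with `S = sixG6inv` integral, so the norm condition reads `cᵀSc = 4` and
the order condition reads `Sc ≡ 0 [mod 2]`, `Sc ≢ 0 [mod 6]`. Since `c = G₆ (G₆⁻¹c)`,
Cauchy–Schwarz for the form `G₆` gives `cᵢ² ≤ (G₆)ᵢᵢ · cᵀG₆⁻¹c ≤ 4 · 2/3 < 4`, so
`c ∈ {-1, 0, 1}⁶`; the parity of `(Sc)₁ = 2c₁ - c₀` forces `c₀ = 0`, and the remaining
candidates are checked one by one. -/

open Matrix

/-- The Gram matrix of the even positive definite lattice `L₆` (determinant 108). -/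
def G6 : Matrix (Fin 6) (Fin 6) ℚ :=
  !![4, 2, 0, 0, -2, 0;
     2, 4, 0, 0, -1, 0;
     0, 0, 2, -1, 0, 0;
     0, 0, -1, 2, 0, 0;
     -2, -1, 0, 0, 2, 1;
     0, 0, 0, 0, 1, 4]

theorem exists_intCast_eq_of_coprime {x : ℚ} {k p : ℕ} (hkp : Nat.Coprime k p)
    (hk : ∃ m : ℤ, (k : ℚ) * x = m) (hp : ∃ m : ℤ, (p : ℚ) * x = m) : ∃ m : ℤ, x = m := by
  obtain ⟨a, ha⟩ := hk
  obtain ⟨b, hb⟩ := hp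
  have hbezout : ((k.gcdA p * k + k.gcdB p * p : ℤ) : ℚ) = 1 := by
    rw [mul_comm _ (k : ℤ), mul_comm _ (p : ℤ), ← Nat.gcd_eq_gcd_ab, hkp, Nat.cast_one,
      Int.cast_one]
  refine ⟨k.gcdA p * a + k.gcdB p * b, ?_⟩
  push_cast at hbezout ⊢
  linear_combination (-x) * hbezout + (k.gcdA p : ℚ) * ha + (k.gcdB p : ℚ) * hb

theorem isLeast_integral_multiples_iff_of_prime {ι : Type*} (w : ι → ℚ) {p : ℕ}
    (hp : p.Prime) :
    IsLeast {k : ℕ | 0 < k ∧ ∀ i, ∃ m : ℤ, (k : ℚ) * w i = m} p ↔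
      (∀ i, ∃ m : ℤ, (p : ℚ) * w i = m) ∧ ¬ ∀ i, ∃ m : ℤ, w i = m := by
  constructor
  · rintro ⟨⟨-, hpw⟩, hleast⟩
    exact ⟨hpw, fun hw => hp.one_lt.not_ge (hleast ⟨one_pos, by simpa using hw⟩)⟩
  · rintro ⟨hpw, hw⟩
    refine ⟨⟨hp.pos, hpw⟩, fun k ⟨hk0, hkw⟩ => le_of_not_gt fun hkp => hw fun i => ?_⟩
    have hcop : Nat.Coprime k p :=
      (hp.coprime_iff_not_dvd.2 (Nat.not_dvd_of_pos_of_lt hk0 hkp)).symm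
    exact exists_intCast_eq_of_coprime hcop (hkw i) (hpw i)

theorem exists_intCast_div_eq_iff_dvd {x d : ℤ} (hd : d ≠ 0) :
    (∃ m : ℤ, (x : ℚ) / d = m) ↔ d ∣ x := by
  constructor
  · rintro ⟨m, hm⟩
    rw [div_eq_iff (by exact_mod_cast hd)] at hm
    exact ⟨m, by exact_mod_cast hm.trans (mul_comm _ _)⟩
  · rintro ⟨m, rfl⟩
    exact ⟨m, by push_cast; field_simp⟩

theorem Matrix.sq_le_diag_mul_dotProduct_inv_mulVec {n K : Type*} [Fintype n] [DecidableEq n]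
    [Field K] [LinearOrder K] [IsStrictOrderedRing K] {A : Matrix n n K} (hA : A.IsSymm)
    (hpos : ∀ x, 0 ≤ x ⬝ᵥ A *ᵥ x) (hdet : IsUnit A.det) (c : n → K) (i : n) :
    c i ^ 2 ≤ A i i * (c ⬝ᵥ A⁻¹ *ᵥ c) := by
  set w := A⁻¹ *ᵥ c
  have hAw : A *ᵥ w = c := by rw [mulVec_mulVec, mul_nonsing_inv A hdet, one_mulVec]
  have hwA : w ᵥ* A = c := by rw [← mulVec_transpose, hA.eq, hAw]
  have hcs := (toBilin' A).apply_mul_apply_le_of_forall_zero_le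
    (by simpa only [toBilin'_apply'] using hpos) (Pi.single i 1) w
  rwa [toBilin'_single, toBilin'_apply', toBilin'_apply', toBilin'_apply', hAw,
    single_one_dotProduct, dotProduct_mulVec, hwA, dotProduct_single_one, dotProduct_comm,
    ← sq] at hcs

def sixG6inv : Matrix (Fin 6) (Fin 6) ℤ :=
  !![4, -1, 0, 0, 4, -1;
     -1, 2, 0, 0, 0, 0;
     0, 0, 4, 2, 0, 0;
     0, 0, 2, 4, 0, 0;
     4, 0, 0, 0, 8, -2;
     -1, 0, 0, 0, -2, 2]

theorem G6_mul_sixG6inv : G6 * ((6 : ℚ)⁻¹ • sixG6inv.map (Int.castRingHom ℚ)) = 1 := by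
  ext i j
  fin_cases i <;> fin_cases j <;>
    norm_num [G6, sixG6inv, mul_apply, Fin.sum_univ_succ, one_apply]

theorem G6_inv_eq : G6⁻¹ = (6 : ℚ)⁻¹ • sixG6inv.map (Int.castRingHom ℚ) :=
  inv_eq_right_inv G6_mul_sixG6inv

theorem isUnit_G6_det : IsUnit G6.det :=
  isUnit_det_of_right_inverse G6_mul_sixG6inv

theorem G6_isSymm : G6.IsSymm := by
  ext i j
  fin_cases i <;> fin_cases j <;> rfl

theorem dotProduct_G6_mulVec_self_nonneg (x : Fin 6 → ℚ) : 0 ≤ x ⬝ᵥ G6 *ᵥ x := by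
  have hsos : x ⬝ᵥ G6 *ᵥ x = (2 * x 0 + x 1 - x 4) ^ 2 + 3 * x 1 ^ 2 + (x 4 + x 5) ^ 2
      + 3 * x 5 ^ 2 + (x 2 - x 3) ^ 2 + x 2 ^ 2 + x 3 ^ 2 := by
    simp only [dotProduct, mulVec, G6, of_apply, cons_val', Fin.sum_univ_succ, Fin.sum_univ_zero,
      cons_val_zero, cons_val_succ, Fin.succ_zero_eq_one, Fin.succ_one_eq_two, Fin.reduceSucc]
    ring
  rw [hsos]
  positivity

theorem G6_inv_mulVec_intCast (c : Fin 6 → ℤ) :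
    G6⁻¹ *ᵥ (fun i => (c i : ℚ)) = fun i => ((sixG6inv *ᵥ c) i : ℚ) / 6 := by
  ext i
  rw [G6_inv_eq, smul_mulVec, Pi.smul_apply, smul_eq_mul, inv_mul_eq_div,
    ← eq_intCast (Int.castRingHom ℚ), RingHom.map_mulVec]
  rfl

theorem abs_le_one_of_dotProduct_G6_inv_mulVec_eq (c : Fin 6 → ℤ)
    (h : (fun i => (c i : ℚ)) ⬝ᵥ G6⁻¹ *ᵥ (fun i => (c i : ℚ)) = 2 / 3) (i : Fin 6) :
    |c i| ≤ 1 := by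
  have hcs := sq_le_diag_mul_dotProduct_inv_mulVec G6_isSymm dotProduct_G6_mulVec_self_nonneg
    isUnit_G6_det (fun i => (c i : ℚ)) i
  have hdiag : G6 i i ≤ 4 := by fin_cases i <;> norm_num [G6]
  rw [h] at hcs
  have hsq : c i ^ 2 < 2 ^ 2 := by exact_mod_cast (by nlinarith : (c i : ℚ) ^ 2 < 2 ^ 2)
  have := abs_lt_of_sq_lt_sq hsq zero_le_two
  omega

theorem type_ii_iff_sixG6inv (c : Fin 6 → ℤ) :
    ((fun i => (c i : ℚ)) ⬝ᵥ G6⁻¹.mulVec (fun i => (c i : ℚ)) = 2 / 3 ∧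
      IsLeast {k : ℕ | 0 < k ∧
        ∀ i, ∃ m : ℤ, (k : ℚ) * G6⁻¹.mulVec (fun i => (c i : ℚ)) i = (m : ℚ)} 3) ↔
    c ⬝ᵥ sixG6inv *ᵥ c = 4 ∧ (∀ i, 2 ∣ (sixG6inv *ᵥ c) i) ∧ ¬ ∀ i, 6 ∣ (sixG6inv *ᵥ c) i := by
  have hdot : (fun i => (c i : ℚ)) ⬝ᵥ (fun i => ((sixG6inv *ᵥ c) i : ℚ) / 6) =
      ((c ⬝ᵥ sixG6inv *ᵥ c : ℤ) : ℚ) / 6 := by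
    simp only [dotProduct, Int.cast_sum, Int.cast_mul, Finset.sum_div, mul_div_assoc]
  have hnorm (q : ℤ) : (q : ℚ) / 6 = 2 / 3 ↔ q = 4 := by
    constructor
    · intro h
      exact_mod_cast (by linarith : (q : ℚ) = 4)
    · rintro rfl
      norm_num
  have hthird (x : ℤ) : (∃ m : ℤ, ((3 : ℕ) : ℚ) * ((x : ℚ) / 6) = m) ↔ 2 ∣ x := by
    rw [← exists_intCast_div_eq_iff_dvd two_ne_zero]
    refine exists_congr fun m => ?_
    rw [show ((3 : ℕ) : ℚ) * ((x : ℚ) / 6) = x / 2 by push_cast; ring, Int.cast_two]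
  have hsixth (x : ℤ) : (∃ m : ℤ, (x : ℚ) / 6 = m) ↔ 6 ∣ x := by
    exact_mod_cast exists_intCast_div_eq_iff_dvd (x := x) (d := 6) (by norm_num)
  rw [isLeast_integral_multiples_iff_of_prime _ Nat.prime_three, G6_inv_mulVec_intCast, hdot,
    hnorm]
  simp only [hthird, hsixth]

theorem mem_type_ii_list_of_abs_le_one (c : Fin 6 → ℤ) (hb : ∀ i, |c i| ≤ 1)
    (hq : c ⬝ᵥ sixG6inv *ᵥ c = 4) (h2 : 2 ∣ (sixG6inv *ᵥ c) 1) :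
    c = ![0, 0, 1, 0, 0, 0] ∨ c = ![0, 0, 0, 1, 0, 0] ∨ c = ![0, 0, 1, -1, 0, 0] ∨
      c = ![0, 1, 0, 0, 0, -1] ∨ c = ![0, 1, 0, 0, 0, 1] ∨
      -c = ![0, 0, 1, 0, 0, 0] ∨ -c = ![0, 0, 0, 1, 0, 0] ∨ -c = ![0, 0, 1, -1, 0, 0] ∨
      -c = ![0, 1, 0, 0, 0, -1] ∨ -c = ![0, 1, 0, 0, 0, 1] := by
  obtain ⟨a0, a1, a2, a3, a4, a5, rfl⟩ : ∃ a0 a1 a2 a3 a4 a5, c = ![a0, a1, a2, a3, a4, a5] :=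
    ⟨c 0, c 1, c 2, c 3, c 4, c 5, by ext i; fin_cases i <;> rfl⟩
  obtain ⟨hl0, hu0⟩ : -1 ≤ a0 ∧ a0 ≤ 1 := abs_le.1 (hb 0)
  obtain ⟨hl1, hu1⟩ : -1 ≤ a1 ∧ a1 ≤ 1 := abs_le.1 (hb 1)
  obtain ⟨hl2, hu2⟩ : -1 ≤ a2 ∧ a2 ≤ 1 := abs_le.1 (hb 2)
  obtain ⟨hl3, hu3⟩ : -1 ≤ a3 ∧ a3 ≤ 1 := abs_le.1 (hb 3)
  obtain ⟨hl4, hu4⟩ : -1 ≤ a4 ∧ a4 ≤ 1 := abs_le.1 (hb 4)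
  obtain ⟨hl5, hu5⟩ : -1 ≤ a5 ∧ a5 ≤ 1 := abs_le.1 (hb 5)
  simp only [dotProduct, mulVec, sixG6inv, of_apply, cons_val', Fin.sum_univ_succ,
    Fin.sum_univ_zero, cons_val_zero, cons_val_succ, cons_val_one, Fin.succ_zero_eq_one,
    Fin.succ_one_eq_two, Fin.reduceSucc] at hq h2
  obtain rfl : a0 = 0 := by omega
  interval_cases a1 <;> interval_cases a2 <;> interval_cases a3 <;> interval_cases a4 <;>
    interval_cases a5 <;> first | omega | decide

theorem L6_type_ii_classification_general (c : Fin 6 → ℤ) :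
    ((fun i => (c i : ℚ)) ⬝ᵥ G6⁻¹.mulVec (fun i => (c i : ℚ)) = 2 / 3 ∧
      IsLeast {k : ℕ | 0 < k ∧
        ∀ i, ∃ m : ℤ, (k : ℚ) * G6⁻¹.mulVec (fun i => (c i : ℚ)) i = (m : ℚ)} 3) ↔
    (c = ![0, 0, 1, 0, 0, 0] ∨ c = ![0, 0, 0, 1, 0, 0] ∨ c = ![0, 0, 1, -1, 0, 0] ∨
      c = ![0, 1, 0, 0, 0, -1] ∨ c = ![0, 1, 0, 0, 0, 1] ∨
      -c = ![0, 0, 1, 0, 0, 0] ∨ -c = ![0, 0, 0, 1, 0, 0] ∨ -c = ![0, 0, 1, -1, 0, 0] ∨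
      -c = ![0, 1, 0, 0, 0, -1] ∨ -c = ![0, 1, 0, 0, 0, 1]) := by
  constructor
  · intro h
    obtain ⟨hq, h2, -⟩ := (type_ii_iff_sixG6inv c).1 h
    exact mem_type_ii_list_of_abs_le_one c (abs_le_one_of_dotProduct_G6_inv_mulVec_eq c h.1)
      hq (h2 1)
  · intro h
    refine (type_ii_iff_sixG6inv c).2 ?_
    simp only [neg_eq_iff_eq_neg] at h
    rcases h with rfl | rfl | rfl | rfl | rfl | rfl | rfl | rfl | rfl | rfl <;> decide

/-- Classification of vectors of type (ii) in `L₆`: a nonzero `c ∈ ℤ⁶` has norm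
`cᵀG₆⁻¹c = 2/3` and order `3` in the discriminant group iff `±c` is one of the five
listed vectors. -/
theorem L6_type_ii_classification (c : Fin 6 → ℤ) (hc : c ≠ 0) :
    ((fun i => (c i : ℚ)) ⬝ᵥ G6⁻¹.mulVec (fun i => (c i : ℚ)) = 2 / 3 ∧
      IsLeast {k : ℕ | 0 < k ∧
        ∀ i, ∃ m : ℤ, (k : ℚ) * G6⁻¹.mulVec (fun i => (c i : ℚ)) i = (m : ℚ)} 3) ↔
    (c = ![0, 0, 1, 0, 0, 0] ∨ c = ![0, 0, 0, 1, 0, 0] ∨ c = ![0, 0, 1, -1, 0, 0] ∨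
      c = ![0, 1, 0, 0, 0, -1] ∨ c = ![0, 1, 0, 0, 0, 1] ∨
      -c = ![0, 0, 1, 0, 0, 0] ∨ -c = ![0, 0, 0, 1, 0, 0] ∨ -c = ![0, 0, 1, -1, 0, 0] ∨
      -c = ![0, 1, 0, 0, 0, -1] ∨ -c = ![0, 1, 0, 0, 0, 1]) :=
  L6_type_ii_classification_general c
end

section
/- (Lattice isomorphism U ⊕ U(10) ⊕ A₄(−1) ≅ 2U ⊕ L₄(−1)) Let U = [[0,1],[1,0]], U(10) = [[0,10],[10,0]], let A be the Gram matrix [[2,1,0,0],[1,2,1,0],[0,1,2,1],[0,0,1,2]] of the root lattice A₄, and let G₄ = [[4,2,2,2],[2,6,1,1],[2,1,6,1],[2,1,1,6]] be the Gram matrix of L₄. Let G₁ be the 8×8 block-diagonal matrix with blocks U, U(10), −A, and let G₂ be the 8×8 block-diagonal matrix with blocks U, U, −G₄. Then there exists an integer matrix P ∈ GL₈(ℤ) (i.e. with det P = ±1) such that Pᵀ·G₁·P = G₂; equivalently, the even lattices U ⊕ U(10) ⊕ A₄(−1) and U ⊕ U ⊕ L₄(−1) are isomorphic. -/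
set_option maxHeartbeats 1000000


open Matrix

/-- The Gram matrix of `U ⊕ U(10) ⊕ A₄(−1)`, block diagonal with blocks
`U = [[0,1],[1,0]]`, `U(10) = [[0,10],[10,0]]` and the negative of the Gram matrix
of the root lattice `A₄`. -/
def Gram1 : Matrix (Fin 8) (Fin 8) ℤ :=
  !![0, 1, 0, 0, 0, 0, 0, 0;
     1, 0, 0, 0, 0, 0, 0, 0;
     0, 0, 0, 10, 0, 0, 0, 0;
     0, 0, 10, 0, 0, 0, 0, 0;
     0, 0, 0, 0, -2, -1, 0, 0;
     0, 0, 0, 0, -1, -2, -1, 0;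
     0, 0, 0, 0, 0, -1, -2, -1;
     0, 0, 0, 0, 0, 0, -1, -2]

/-- The Gram matrix of `U ⊕ U ⊕ L₄(−1)`, block diagonal with two hyperbolic planes
`U = [[0,1],[1,0]]` and the negative of the Gram matrix `G₄` of `L₄`. -/
def Gram2 : Matrix (Fin 8) (Fin 8) ℤ :=
  !![0, 1, 0, 0, 0, 0, 0, 0;
     1, 0, 0, 0, 0, 0, 0, 0;
     0, 0, 0, 1, 0, 0, 0, 0;
     0, 0, 1, 0, 0, 0, 0, 0;
     0, 0, 0, 0, -4, -2, -2, -2;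
     0, 0, 0, 0, -2, -6, -1, -1;
     0, 0, 0, 0, -2, -1, -6, -1;
     0, 0, 0, 0, -2, -1, -1, -6]

/-- The base-change matrix realizing the isomorphism. -/
def Pmat : Matrix (Fin 8) (Fin 8) ℤ :=
  !![1, 0, 0, 0, 0, 0, 0, 0;
     0, 1, 0, 0, 0, 0, 0, 0;
     0, 0, -2, -1, -1, -4, -3, -1;
     0, 0, -2, -1, -1, -4, -3, 0;
     0, 0, -3, -1, -2, -6, -3, -1;
     0, 0, -3, -2, -2, -6, -7, -1;
     0, 0, -2, -1, 0, -5, -1, 0;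
     0, 0, -1, 0, 0, 0, -2, 0]

/-- The inverse of `Pmat`. -/
def Qmat : Matrix (Fin 8) (Fin 8) ℤ :=
  !![1, 0, 0, 0, 0, 0, 0, 0;
     0, 1, 0, 0, 0, 0, 0, 0;
     0, 0, -10, -10, 4, 6, 4, 1;
     0, 0, -20, -20, 9, 11, 8, 4;
     0, 0, -3, -4, 1, 2, 2, 1;
     0, 0, 7, 7, -3, -4, -3, -1;
     0, 0, 5, 5, -2, -3, -2, -1;
     0, 0, -1, 1, 0, 0, 0, 0]

/-- Intermediate product `Pmatᵀ * Gram1`. -/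
def Rmat : Matrix (Fin 8) (Fin 8) ℤ :=
  !![0, 1, 0, 0, 0, 0, 0, 0;
     1, 0, 0, 0, 0, 0, 0, 0;
     0, 0, -20, -20, 9, 11, 8, 4;
     0, 0, -10, -10, 4, 6, 4, 1;
     0, 0, -10, -10, 6, 6, 2, 0;
     0, 0, -40, -40, 18, 23, 16, 5;
     0, 0, -30, -30, 13, 18, 11, 5;
     0, 0, 0, -10, 3, 3, 1, 0]

lemma R_eq : Pmatᵀ * Gram1 = Rmat := by decide

lemma RP_eq : Rmat * Pmat = Gram2 := by decide

lemma PQ_eq_one : Pmat * Qmat = 1 := by decide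

lemma det_pm : Pmat.det = 1 ∨ Pmat.det = -1 :=
  Int.isUnit_iff.mp
    (@Matrix.isUnit_det_of_invertible _ _ _ _ _ Pmat
      (invertibleOfRightInverse Pmat Qmat PQ_eq_one))

/-- The even lattices `U ⊕ U(10) ⊕ A₄(−1)` and `U ⊕ U ⊕ L₄(−1)` are isomorphic:
there is a unimodular integer matrix `P` with `Pᵀ·G₁·P = G₂`. -/
theorem lattice_isomorphism_U_U10_A4 :
    ∃ P : Matrix (Fin 8) (Fin 8) ℤ,
      (P.det = 1 ∨ P.det = -1) ∧ Pᵀ * Gram1 * P = Gram2 := by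
  exact ⟨Pmat, det_pm, by rw [R_eq, RP_eq]⟩
end
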